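/- Let (Z_n)_{n≥0} be a Galton–Watson branching process with Z_0 = 1 and offspring distribution of mean μ satisfying 0 < μ < 1 (subcritical case). Then Z_n → 0 almost surely, and moreover extinction occurs almost surely: P(∃ n, Z_n = 0) = 1. -/

import Mathlib

open MeasureTheory ProbabilityTheory Filter
open scoped ENNReal

/-! Since `Zₙ` is `𝓕ₙ`-measurable and every `ξₙ,ᵢ` is independent of `𝓕ₙ`, Wald's identity gives
`E Zₙ₊₁ = μ · E Zₙ`, so `E Zₙ = μⁿ`. By Markov's inequality `P(Zₙ ≠ 0) ≤ μⁿ`, which is summable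
for `μ < 1`, so by Borel–Cantelli almost surely `Zₙ = 0` for all large `n`. -/

section RandomSum

variable {Ω : Type*} {m mΩ : MeasurableSpace Ω} {P : Measure Ω}

theorem sum_Icc_eq_tsum_indicator {M : Type*} [AddCommMonoid M] [TopologicalSpace M]
    (N : Ω → ℕ) (Y : ℕ → Ω → M) (ω : Ω) :
    ∑ i ∈ Finset.Icc 1 (N ω), Y i ω
      = ∑' i, {ω' | i ∈ Finset.Icc 1 (N ω')}.indicator (Y i) ω := by
  rw [sum_eq_tsum_indicator]
  congr 1 with i

theorem measurableSet_mem_Icc {N : Ω → ℕ} (hN : Measurable[m] N) (i : ℕ) :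
    MeasurableSet[m] {ω | i ∈ Finset.Icc 1 (N ω)} :=
  hN (MeasurableSet.of_discrete (s := {n | i ∈ Finset.Icc 1 n}))

theorem lintegral_natCast_eq_tsum_measure {N : Ω → ℕ} (hN : Measurable N) :
    ∫⁻ ω, (N ω : ℝ≥0∞) ∂P = ∑' i, P {ω | i ∈ Finset.Icc 1 (N ω)} := by
  have hcount : ∀ ω, (N ω : ℝ≥0∞) = ∑ i ∈ Finset.Icc 1 (N ω), (1 : Ω → ℝ≥0∞) ω := by simp
  simp_rw [hcount, sum_Icc_eq_tsum_indicator]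
  rw [lintegral_tsum fun i => (measurable_one.indicator (measurableSet_mem_Icc hN i)).aemeasurable]
  exact tsum_congr fun i => lintegral_indicator_one (measurableSet_mem_Icc hN i)

/-- Wald's identity. -/
theorem lintegral_sum_Icc_eq_lintegral_mul (hm : m ≤ mΩ) {N : Ω → ℕ} (hN : Measurable[m] N)
    {X : ℕ → Ω → ℕ} (hX : ∀ i, Measurable (X i))
    (hindep : ∀ i, Indep m (MeasurableSpace.comap (X i) inferInstance) P)
    {c : ℝ≥0∞} (hc : ∀ i, ∫⁻ ω, (X i ω : ℝ≥0∞) ∂P = c) :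
    ∫⁻ ω, ((∑ i ∈ Finset.Icc 1 (N ω), X i ω : ℕ) : ℝ≥0∞) ∂P
      = (∫⁻ ω, (N ω : ℝ≥0∞) ∂P) * c := by
  have hA : ∀ i, MeasurableSet[m] {ω | i ∈ Finset.Icc 1 (N ω)} := measurableSet_mem_Icc hN
  have hXmeas : ∀ i, Measurable fun ω => (X i ω : ℝ≥0∞) := fun i =>
    measurable_from_nat.comp (hX i)
  have hterm : ∀ i, ∫⁻ ω, {ω | i ∈ Finset.Icc 1 (N ω)}.indicator (fun ω => (X i ω : ℝ≥0∞)) ω ∂P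
      = P {ω | i ∈ Finset.Icc 1 (N ω)} * c := by
    intro i
    have hXi : Measurable[MeasurableSpace.comap (X i) inferInstance] fun ω => (X i ω : ℝ≥0∞) :=
      measurable_from_nat.comp (comap_measurable (X i))
    rw [← lintegral_indicator_one (hm _ (hA i)), ← hc i,
      ← lintegral_mul_eq_lintegral_mul_lintegral_of_independent_measurableSpace hm
        (hX i).comap_le (hindep i) (@measurable_one _ _ _ m _ |>.indicator (hA i))
        hXi]
    congr 1 with ω
    simp [Set.indicator_apply]
  simp_rw [Nat.cast_sum, sum_Icc_eq_tsum_indicator N fun i ω => (X i ω : ℝ≥0∞)]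
  rw [lintegral_tsum fun i => ((hXmeas i).indicator (hm _ (hA i))).aemeasurable,
    lintegral_natCast_eq_tsum_measure (hN.mono hm le_rfl), ← ENNReal.tsum_mul_right]
  exact tsum_congr hterm

end RandomSum

section Extinction

variable {Ω : Type*} [MeasurableSpace Ω] {P : Measure Ω}

theorem measure_ne_zero_le_lintegral_natCast {N : Ω → ℕ} (hN : Measurable N) :
    P {ω | N ω ≠ 0} ≤ ∫⁻ ω, (N ω : ℝ≥0∞) ∂P := by
  have hset : {ω | N ω ≠ 0} = {ω | 1 ≤ (N ω : ℝ≥0∞)} := by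
    ext ω
    simp [Nat.one_le_iff_ne_zero]
  have hN' : Measurable fun ω => (N ω : ℝ≥0∞) := measurable_from_nat.comp hN
  simpa [hset] using mul_meas_ge_le_lintegral hN' 1 (μ := P)

theorem lintegral_natCast_eq_ofReal_integral {N : Ω → ℕ}
    (hN : Integrable (fun ω => (N ω : ℝ)) P) :
    ∫⁻ ω, (N ω : ℝ≥0∞) ∂P = ENNReal.ofReal (∫ ω, (N ω : ℝ) ∂P) := by
  rw [ofReal_integral_eq_lintegral_ofReal hN (.of_forall fun ω => N ω |>.cast_nonneg)]
  simp

theorem ae_eventually_eq_zero_of_lintegral_le_geometric {N : ℕ → Ω → ℕ}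
    (hN : ∀ n, Measurable (N n)) {r : ℝ≥0∞} (hr : r < 1)
    (h : ∀ n, ∫⁻ ω, (N n ω : ℝ≥0∞) ∂P ≤ r ^ n) :
    ∀ᵐ ω ∂P, ∀ᶠ n in atTop, N n ω = 0 := by
  have hsum : ∑' n, P {ω | N n ω ≠ 0} ≠ ∞ :=
    ne_top_of_le_ne_top (tsum_geometric_lt_top.2 hr).ne
      (ENNReal.tsum_le_tsum fun n => (measure_ne_zero_le_lintegral_natCast (hN n)).trans (h n))
  filter_upwards [ae_eventually_notMem hsum] with ω hω
  simpa using hω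

end Extinction

section GaltonWatson

variable {Ω : Type*} [MeasurableSpace Ω] {P : Measure Ω} {Z : ℕ → Ω → ℕ} {ξ : ℕ → ℕ → Ω → ℕ}

theorem lintegral_galtonWatson_eq_pow [IsProbabilityMeasure P] (hZmeas : ∀ n, Measurable (Z n))
    (hξmeas : ∀ n i, Measurable (ξ n i)) (hZ0 : ∀ ω, Z 0 ω = 1)
    (hrec : ∀ n ω, Z (n + 1) ω = ∑ i ∈ Finset.Icc 1 (Z n ω), ξ n i ω)
    (hindep : ∀ n i, Indep (⨆ k ≤ n, MeasurableSpace.comap (Z k) inferInstance)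
      (MeasurableSpace.comap (ξ n i) inferInstance) P)
    {c : ℝ≥0∞} (hc : ∀ n i, ∫⁻ ω, (ξ n i ω : ℝ≥0∞) ∂P = c) (n : ℕ) :
    ∫⁻ ω, (Z n ω : ℝ≥0∞) ∂P = c ^ n := by
  induction n with
  | zero => simp [hZ0]
  | succ n ih =>
    have hle : ⨆ k ≤ n, MeasurableSpace.comap (Z k) inferInstance ≤ ‹MeasurableSpace Ω› :=
      iSup₂_le fun k _ => (hZmeas k).comap_le
    have hZn : Measurable[⨆ k ≤ n, MeasurableSpace.comap (Z k) inferInstance] (Z n) :=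
      Measurable.of_comap_le (le_iSup₂ (f := fun k (_ : k ≤ n) =>
        MeasurableSpace.comap (Z k) inferInstance) n le_rfl)
    simp_rw [hrec n]
    rw [lintegral_sum_Icc_eq_lintegral_mul hle hZn (hξmeas n) (hindep n) (hc n), ih, pow_succ]

end GaltonWatson

theorem galtonWatson_subcritical_extinction_general
    {Ω : Type*} [MeasurableSpace Ω] (P : Measure Ω) [IsProbabilityMeasure P]
    (Z : ℕ → Ω → ℕ) (ξ : ℕ → ℕ → Ω → ℕ)
    (hZmeas : ∀ n, Measurable (Z n)) (hξmeas : ∀ n i, Measurable (ξ n i))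
    (hZ0 : ∀ ω, Z 0 ω = 1)
    -- branching recursion: `Z_{n+1} = ∑_{i=1}^{Zₙ} ξ_{n,i}`
    (hrec : ∀ n ω, Z (n + 1) ω = ∑ i ∈ Finset.Icc 1 (Z n ω), ξ n i ω)
    (μ : ℝ) (hμ1 : μ < 1)
    -- ... integrable, with common mean `μ`
    (hint : ∀ n i, Integrable (fun ω => (ξ n i ω : ℝ)) P)
    (hmean : ∀ n i, ∫ ω, (ξ n i ω : ℝ) ∂P = μ)
    -- for each `n`, the variables `(ξ_{n,i})_{i≥1}` together with `𝓕ₙ = σ(Z₀,…,Zₙ)`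
    -- form a mutually independent family (i.i.d. and independent of `𝓕ₙ`)
    (hindep : ∀ n, iIndep
      (fun j : Option ℕ => j.elim (⨆ k ≤ n, MeasurableSpace.comap (Z k) inferInstance)
        (fun i => MeasurableSpace.comap (ξ n i) inferInstance)) P) :
    (∀ᵐ ω ∂P, Tendsto (fun n => (Z n ω : ℝ)) atTop (nhds 0)) ∧
      P {ω | ∃ n, Z n ω = 0} = 1 := by
  have hc : ∀ n i, ∫⁻ ω, (ξ n i ω : ℝ≥0∞) ∂P = ENNReal.ofReal μ := fun n i => by
    rw [lintegral_natCast_eq_ofReal_integral (hint n i), hmean]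
  have hξindep : ∀ n i, Indep (⨆ k ≤ n, MeasurableSpace.comap (Z k) inferInstance)
      (MeasurableSpace.comap (ξ n i) inferInstance) P := fun n i =>
    (hindep n).indep (i := none) (j := some i) (by simp)
  have hext : ∀ᵐ ω ∂P, ∀ᶠ n in atTop, Z n ω = 0 :=
    ae_eventually_eq_zero_of_lintegral_le_geometric hZmeas (ENNReal.ofReal_lt_one.2 hμ1)
      fun n => (lintegral_galtonWatson_eq_pow hZmeas hξmeas hZ0 hrec hξindep hc n).le
  refine ⟨hext.mono fun ω hω => tendsto_const_nhds.congr' (hω.mono fun n hn => by simp [hn]), ?_⟩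
  have hS : MeasurableSet {ω | ∃ n, Z n ω = 0} := by
    simpa only [Set.ofPred_exists] using .iUnion fun n => hZmeas n (.singleton 0)
  rw [← measure_univ (μ := P), ← ae_iff_measure_eq hS.nullMeasurableSet]
  exact hext.mono fun ω hω => hω.exists

/-- **Subcritical extinction.** For a Galton–Watson branching process `Z` with `Z₀ = 1`
and offspring distribution of mean `μ` with `0 < μ < 1`, we have `Zₙ → 0` almost surely,
and extinction occurs almost surely: `P(∃ n, Zₙ = 0) = 1`. -/
theorem galtonWatson_subcritical_extinction
    {Ω : Type*} [MeasurableSpace Ω] (P : Measure Ω) [IsProbabilityMeasure P]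
    (Z : ℕ → Ω → ℕ) (ξ : ℕ → ℕ → Ω → ℕ)
    (hZmeas : ∀ n, Measurable (Z n)) (hξmeas : ∀ n i, Measurable (ξ n i))
    (hZ0 : ∀ ω, Z 0 ω = 1)
    -- branching recursion: `Z_{n+1} = ∑_{i=1}^{Zₙ} ξ_{n,i}`
    (hrec : ∀ n ω, Z (n + 1) ω = ∑ i ∈ Finset.Icc 1 (Z n ω), ξ n i ω)
    (μ : ℝ) (hμ : 0 < μ) (hμ1 : μ < 1)
    -- the offspring variables are identically distributed ...
    (hlaw : ∀ n i, Measure.map (ξ n i) P = Measure.map (ξ 0 1) P)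
    -- ... integrable, with common mean `μ`
    (hint : ∀ n i, Integrable (fun ω => (ξ n i ω : ℝ)) P)
    (hmean : ∀ n i, ∫ ω, (ξ n i ω : ℝ) ∂P = μ)
    -- for each `n`, the variables `(ξ_{n,i})_{i≥1}` together with `𝓕ₙ = σ(Z₀,…,Zₙ)`
    -- form a mutually independent family (i.i.d. and independent of `𝓕ₙ`)
    (hindep : ∀ n, iIndep
      (fun j : Option ℕ => j.elim (⨆ k ≤ n, MeasurableSpace.comap (Z k) inferInstance)
        (fun i => MeasurableSpace.comap (ξ n i) inferInstance)) P) :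
    (∀ᵐ ω ∂P, Tendsto (fun n => (Z n ω : ℝ)) atTop (nhds 0)) ∧
      P {ω | ∃ n, Z n ω = 0} = 1 :=
  galtonWatson_subcritical_extinction_general P Z ξ hZmeas hξmeas hZ0 hrec μ hμ1 hint hmean hindep
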